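/- Let G be a simply connected simple classical algebraic group over an algebraically closed field K of characteristic p ≥ 0, let H be a maximal C_2-subgroup of G with semisimple part (H^0)' = X_1 ⋯ X_t (each X_i of rank l), and let V be an irreducible p-restricted KG-module with highest weight λ such that V|_H is irreducible. Suppose μ is a T-weight of V that affords the highest weight of a KH^0-composition factor of V, with associated permutation σ ∈ S_t (i.e. μ|_{X_{σ(i)}} is obtained from λ|_{X_i} by the identification of factors, possibly composed with a graph automorphism in the type-D case). Then for every σ-invariant subset S ⊆ {1,…,t}, one has Σ_{i∈S} h(μ|_{X_i}) = Σ_{i∈S} h(λ|_{X_i}), where h(ν) denotes the sum of the coefficients of ν when expressed in the fundamental dominant weights of the relevant factor. In particular h(μ|_{H^0}) = h(λ|_{H^0}). -/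
import Mathlib


/-!
Lemma 4.2.1 of Burness–Ghandour–Testerman: for a maximal `C_2`-subgroup `H` of a
simply connected simple classical algebraic group `G` with semisimple part
`(H⁰)' = X_1 ⋯ X_t` (each `X_i` of rank `l`), if `V = L_G(λ)` restricts
irreducibly to `H` and `μ ∈ Λ(V)` affords the highest weight of a
`KH⁰`-composition factor with associated permutation `σ ∈ S_t`, then
`Σ_{i ∈ s} h(μ|_{X_i}) = Σ_{i ∈ s} h(λ|_{X_i})` for every `σ`-invariant subset
`s ⊆ {1,…,t}`; in particular `h(μ|_{H⁰}) = h(λ|_{H⁰})`.  Here `h(ν)` is the sum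
of the coefficients of `ν` in the fundamental dominant weights of the relevant
factor.  The algebro-geometric notions not available in Mathlib are abstracted
as the data of a `C2WeightSetting`; restrictions of `T`-weights to the factors
`X_i` are recorded by their integer coordinate vectors in the fundamental-weight
bases, and the meaning of "associated permutation" (Clifford theory: `μ|_{X_{σ(i)}}`
is obtained from `λ|_{X_i}` by the identification of the factors, possibly composed
with a graph automorphism of an even number of the factors in the type-`D` case)
is recorded by the hypotheses on the permutations `ρ i` of the fundamental weights
of the factors.
-/

/-- Abstract data: `G` is a simply connected simple classical algebraic group
over `K` with maximal torus `T` and natural module `W`; `H` is a maximal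
`C_2`-subgroup (the stabilizer of an orthogonal decomposition of `W` into `t`
equal-dimensional subspaces) with semisimple part `(H⁰)' = X_1 ⋯ X_t`, each
factor of rank `l`.
* `GWeight` is the character group `X(T)`;
* `res μ i` is the restriction `μ|_{X_i}`, written in the basis of fundamental
  dominant weights `ω_{i,1}, …, ω_{i,l}` of `X_i`;
* `highest` is the highest weight `λ` of `V = L_G(λ)`;
* `PRes μ` records that `μ` is a dominant `p`-restricted weight;
* `IsWeight μ` records that `μ ∈ Λ(V)`;
* `Affords μ σ` records that a nonzero vector of `T`-weight `μ` is a maximal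
  vector for a Borel subgroup of `H⁰`, i.e. `μ` affords the highest weight of a
  `KH⁰`-composition factor of `V`, with associated permutation `σ`;
* `typeD` records that `H` is of type `(D_l^t.2^{t-1}).S_t`;
* `VHIrred` records that `V|_H` is irreducible. -/
structure C2WeightSetting (K : Type*) [Field K] [IsAlgClosed K]
    (p : ℕ) [CharP K p] where
  t : ℕ
  l : ℕ
  GWeight : Type
  res : GWeight → Fin t → Fin l → ℤ
  highest : GWeight
  PRes : GWeight → Prop
  IsWeight : GWeight → Prop
  Affords : GWeight → Equiv.Perm (Fin t) → Prop
  typeD : Prop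
  VHIrred : Prop

/-- Suppose `V|_H` is irreducible and `μ ∈ Λ(V)` affords the highest weight of a
`KH⁰`-composition factor of `V`, with associated permutation `σ` (so that
`μ|_{X_{σ(i)}}` is obtained from `λ|_{X_i}`, up to a graph automorphism `ρ i` of
an even number of factors in the type-`D` case).  Then for every `σ`-invariant
subset `s` of `{1, …, t}` one has
`Σ_{i ∈ s} h(μ|_{X_i}) = Σ_{i ∈ s} h(λ|_{X_i})`; in particular
`h(μ|_{H⁰}) = h(λ|_{H⁰})`. -/
theorem C2_coefficient_sum_invariance
    (K : Type*) [Field K] [IsAlgClosed K] (p : ℕ) [CharP K p]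
    (S : C2WeightSetting K p)
    (hres : S.PRes S.highest)
    (hirr : S.VHIrred)
    (mu : S.GWeight) (σ : Equiv.Perm (Fin S.t))
    (hwt : S.IsWeight mu) (haff : S.Affords mu σ)
    (ρ : Fin S.t → Equiv.Perm (Fin S.l))
    (hρ1 : ¬ S.typeD → ∀ i, ρ i = 1)
    (hρ2 : ∀ i j, ρ i j ≠ j → (j : ℕ) + 1 = S.l ∨ (j : ℕ) + 2 = S.l)
    (hρeven : S.typeD → Even (Finset.univ.filter fun i => ρ i ≠ 1).card)
    (hassoc : ∀ i, S.res mu (σ i) = S.res S.highest i ∘ (ρ i)) :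
    (∀ s : Finset (Fin S.t), (∀ i ∈ s, σ i ∈ s) →
      (∑ i ∈ s, ∑ j, S.res mu i j) = ∑ i ∈ s, ∑ j, S.res S.highest i j) ∧
    (∑ i, ∑ j, S.res mu i j) = ∑ i, ∑ j, S.res S.highest i j := by
  have key : ∀ s : Finset (Fin S.t), (∀ i ∈ s, σ i ∈ s) →
      (∑ i ∈ s, ∑ j, S.res mu i j) = ∑ i ∈ s, ∑ j, S.res S.highest i j := by
    intro s hs
    have himg : s.image σ = s := by
      apply Finset.eq_of_subset_of_card_le
      · intro x hx
        obtain ⟨a, ha, rfl⟩ := Finset.mem_image.mp hx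
        exact hs a ha
      · rw [Finset.card_image_of_injective _ σ.injective]
    calc (∑ i ∈ s, ∑ j, S.res mu i j)
        = ∑ i ∈ s.image σ, ∑ j, S.res mu i j := by rw [himg]
      _ = ∑ i ∈ s, ∑ j, S.res mu (σ i) j :=
          Finset.sum_image (fun a _ b _ h => σ.injective h)
      _ = ∑ i ∈ s, ∑ j, S.res S.highest i (ρ i j) := by
          refine Finset.sum_congr rfl fun i _ => ?_
          rw [hassoc i]; rfl
      _ = ∑ i ∈ s, ∑ j, S.res S.highest i j := by
          refine Finset.sum_congr rfl fun i _ => ?_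
          exact Equiv.sum_comp (ρ i) (S.res S.highest i)
  exact ⟨key, key Finset.univ (fun i _ => Finset.mem_univ _)⟩
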